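/- arXiv:math/0512362 — 5 statements merged into one kernel-verified Lean document; each statement's English description precedes it below -/
import Mathlib

section
/- Let H be a complex Hilbert space, A a von Neumann algebra on H, and B an abelian von Neumann subalgebra of A. Suppose that for every vector ξ ∈ H there exists a conditional expectation of A onto B compatible with ξ. Then B is contained in the commutant A' of A, i.e. every element of B commutes with every element of A. -/
open scoped ComplexInnerProductSpace

/-- **Necessity of the nondemolition condition** (Theorem 3, necessity direction).
If `B` is an abelian von Neumann subalgebra of `A` such that for every vector `ξ` there
exists a conditional expectation of `A` onto `B` compatible with `ξ` (a linear map on `A`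
with values in `B`, modular over `B`, and matching the state `⟨ξ, ·ξ⟩` on `A`), then `B`
is contained in the commutant of `A`: every element of `B` commutes with every element
of `A`. -/
theorem abelian_subalgebra_subset_commutant_of_forall_conditional_expectation
    {H : Type*} [NormedAddCommGroup H] [InnerProductSpace ℂ H] [CompleteSpace H]
    (A B : VonNeumannAlgebra H)
    (hBA : ∀ x ∈ B, x ∈ A)
    (hBabelian : ∀ b₁ ∈ B, ∀ b₂ ∈ B, b₁ * b₂ = b₂ * b₁)
    (hexists : ∀ ξ : H, ∃ ε : (H →L[ℂ] H) → (H →L[ℂ] H),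
      (∀ X ∈ A, ∀ Y ∈ A, ε (X + Y) = ε X + ε Y) ∧
      (∀ (c : ℂ), ∀ X ∈ A, ε (c • X) = c • ε X) ∧
      (∀ X ∈ A, ε X ∈ B) ∧
      (∀ X ∈ A, ∀ b ∈ B, ε (X * b) = ε X * b ∧ ε (b * X) = b * ε X) ∧
      (∀ X ∈ A, ⟪ξ, ε X ξ⟫ = ⟪ξ, X ξ⟫)) :
    ∀ b ∈ B, ∀ a ∈ A, a * b = b * a := by
  intro b hb a ha
  have key : ∀ ξ : H, ⟪ξ, (a * b) ξ⟫ = ⟪ξ, (b * a) ξ⟫ := by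
    intro ξ
    obtain ⟨ε, -, -, hmem, hmod, hcomp⟩ := hexists ξ
    have hab : a * b ∈ A := A.mul_mem ha (hBA b hb)
    have hba : b * a ∈ A := A.mul_mem (hBA b hb) ha
    have h1 : ε (a * b) = ε a * b := (hmod a ha b hb).1
    have h2 : ε (b * a) = b * ε a := (hmod a ha b hb).2
    have hcomm : ε a * b = b * ε a := hBabelian _ (hmem a ha) _ hb
    calc ⟪ξ, (a * b) ξ⟫ = ⟪ξ, ε (a * b) ξ⟫ := (hcomp _ hab).symm
      _ = ⟪ξ, ε (b * a) ξ⟫ := by rw [h1, h2, hcomm]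
      _ = ⟪ξ, (b * a) ξ⟫ := hcomp _ hba
  have : ((a * b : H →L[ℂ] H) : H →ₗ[ℂ] H) = ((b * a : H →L[ℂ] H) : H →ₗ[ℂ] H) := by
    rw [← ext_inner_map]
    intro x
    have := key x
    calc ⟪((a * b : H →L[ℂ] H) : H →ₗ[ℂ] H) x, x⟫
        = (starRingEnd ℂ) ⟪x, (a * b) x⟫ := (inner_conj_symm _ _).symm
      _ = (starRingEnd ℂ) ⟪x, (b * a) x⟫ := by rw [this]
      _ = ⟪((b * a : H →L[ℂ] H) : H →ₗ[ℂ] H) x, x⟫ := inner_conj_symm _ _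
  exact ContinuousLinearMap.coe_injective (by exact_mod_cast this)
end

section
/- Let C be an abelian von Neumann algebra on a complex Hilbert space H possessing a cyclic vector ξ (that is, the set {Cξ : C ∈ C} is dense in H). Then C is maximal abelian: every bounded operator on H which commutes with all elements of C belongs to C, i.e. C equals its own commutant. -/
open scoped InnerProductSpace
open Filter Topology

namespace MaxAbelianAux

variable {H : Type*} [NormedAddCommGroup H] [InnerProductSpace ℂ H] [CompleteSpace H]

/-- In an abelian ∗-algebra of operators, `‖c*ξ‖ = ‖cξ‖`. -/
lemma norm_star_apply (C : VonNeumannAlgebra H)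
    (habelian : ∀ c₁ ∈ C, ∀ c₂ ∈ C, c₁ * c₂ = c₂ * c₁) (ξ : H)
    {c : H →L[ℂ] H} (hc : c ∈ C) : ‖(star c) ξ‖ = ‖c ξ‖ := by
  have hsc : star c ∈ C := star_mem hc
  have h1 : (⟪(star c) ξ, (star c) ξ⟫_ℂ) = ⟪c ξ, c ξ⟫_ℂ := by
    rw [ContinuousLinearMap.star_eq_adjoint]
    rw [ContinuousLinearMap.adjoint_inner_left]
    have h2 : c ((ContinuousLinearMap.adjoint c) ξ) = (c * star c) ξ := by
      rw [ContinuousLinearMap.star_eq_adjoint]; rfl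
    rw [h2, habelian c hc (star c) hsc]
    have h3 : (star c * c) ξ = (ContinuousLinearMap.adjoint c) (c ξ) := by
      rw [ContinuousLinearMap.star_eq_adjoint]; rfl
    rw [h3, ContinuousLinearMap.adjoint_inner_right]
  rw [inner_self_eq_norm_sq_to_K, inner_self_eq_norm_sq_to_K] at h1
  have h2 : ‖(star c) ξ‖ ^ 2 = ‖c ξ‖ ^ 2 := by exact_mod_cast h1
  nlinarith [norm_nonneg ((star c) ξ), norm_nonneg (c ξ)]

/-- If `bₙξ → Sξ` with `bₙ ∈ C` and `S` in the commutant, then `bₙ*ξ → S*ξ`. -/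
lemma star_apply_tendsto (C : VonNeumannAlgebra H)
    (habelian : ∀ c₁ ∈ C, ∀ c₂ ∈ C, c₁ * c₂ = c₂ * c₁) (ξ : H)
    (hcyclic : Dense ((fun c : H →L[ℂ] H => c ξ) '' (C : Set (H →L[ℂ] H))))
    {S : H →L[ℂ] H} (hS : ∀ c ∈ C, c * S = S * c)
    {b : ℕ → H →L[ℂ] H} (hb : ∀ n, b n ∈ C)
    (hlim : Tendsto (fun n => b n ξ) atTop (𝓝 (S ξ))) :
    Tendsto (fun n => (star (b n)) ξ) atTop (𝓝 ((star S) ξ)) := by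
  have hC : CauchySeq fun n => (star (b n)) ξ := by
    have h1 : CauchySeq fun n => b n ξ := hlim.cauchySeq
    rw [Metric.cauchySeq_iff] at h1 ⊢
    intro ε hε
    obtain ⟨N, hN⟩ := h1 ε hε
    refine ⟨N, fun m hm n hn => ?_⟩
    have key : dist ((star (b m)) ξ) ((star (b n)) ξ) = dist (b m ξ) (b n ξ) := by
      rw [dist_eq_norm, dist_eq_norm]
      have e : (star (b m)) ξ - (star (b n)) ξ = (star (b m - b n)) ξ := by
        simp [star_sub, ContinuousLinearMap.sub_apply]
      rw [e, norm_star_apply C habelian ξ (sub_mem (hb m) (hb n))]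
      simp [ContinuousLinearMap.sub_apply]
    rw [key]; exact hN m hm n hn
  obtain ⟨η, hη⟩ := cauchySeq_tendsto_of_complete hC
  have hident : η = (star S) ξ := by
    apply ext_inner_right ℂ
    have hfg : (fun v => ⟪η, v⟫_ℂ) = fun v => ⟪(star S) ξ, v⟫_ℂ := by
      apply Continuous.ext_on hcyclic (continuous_const.inner continuous_id)
        (continuous_const.inner continuous_id)
      rintro _ ⟨a, haC, rfl⟩
      have l1 : Tendsto (fun n => ⟪(star (b n)) ξ, a ξ⟫_ℂ) atTop (𝓝 ⟪η, a ξ⟫_ℂ) :=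
        hη.inner tendsto_const_nhds
      have l2 : Tendsto (fun n => ⟪(star (b n)) ξ, a ξ⟫_ℂ) atTop (𝓝 ⟪(star S) ξ, a ξ⟫_ℂ) := by
        have e1 : ∀ n, ⟪(star (b n)) ξ, a ξ⟫_ℂ = ⟪ξ, a (b n ξ)⟫_ℂ := by
          intro n
          rw [ContinuousLinearMap.star_eq_adjoint, ContinuousLinearMap.adjoint_inner_left]
          congr 1
          calc (b n) (a ξ) = (b n * a) ξ := rfl
            _ = (a * b n) ξ := by rw [habelian (b n) (hb n) a haC]
            _ = a (b n ξ) := rfl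
        have e2 : ⟪(star S) ξ, a ξ⟫_ℂ = ⟪ξ, a (S ξ)⟫_ℂ := by
          rw [ContinuousLinearMap.star_eq_adjoint, ContinuousLinearMap.adjoint_inner_left]
          congr 1
          calc S (a ξ) = (S * a) ξ := rfl
            _ = (a * S) ξ := by rw [← hS a haC]
            _ = a (S ξ) := rfl
        simp only [e1, e2]
        exact tendsto_const_nhds.inner ((a.continuous.tendsto _).comp hlim)
      exact tendsto_nhds_unique l1 l2
    intro v; exact congrFun hfg v
  rwa [hident] at hη

/-- Any two elements of the commutant agree on the cyclic vector when composed. -/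
lemma apply_comm (C : VonNeumannAlgebra H)
    (habelian : ∀ c₁ ∈ C, ∀ c₂ ∈ C, c₁ * c₂ = c₂ * c₁) (ξ : H)
    (hcyclic : Dense ((fun c : H →L[ℂ] H => c ξ) '' (C : Set (H →L[ℂ] H))))
    {S T : H →L[ℂ] H} (hS : ∀ c ∈ C, c * S = S * c) (hT : ∀ c ∈ C, c * T = T * c) :
    S (T ξ) = T (S ξ) := by
  obtain ⟨u, hu, hulim⟩ := mem_closure_iff_seq_limit.mp (hcyclic (S ξ))
  choose b hbC hbe using hu
  have hblim : Tendsto (fun n => b n ξ) atTop (𝓝 (S ξ)) := by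
    simpa only [hbe] using hulim
  have hstar := star_apply_tendsto C habelian ξ hcyclic hS hbC hblim
  have hTS : Tendsto (fun n => (b n) (T ξ)) atTop (𝓝 (T (S ξ))) := by
    have h := (T.continuous.tendsto (S ξ)).comp hblim
    have e : ∀ n, T (b n ξ) = (b n) (T ξ) := by
      intro n
      calc T (b n ξ) = (T * b n) ξ := rfl
        _ = (b n * T) ξ := by rw [← hT (b n) (hbC n)]
        _ = (b n) (T ξ) := rfl
    simpa only [Function.comp_def, e] using h
  -- star S commutes with C
  have hS' : ∀ c ∈ C, c * star S = star S * c := by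
    intro c hc
    have h0 := congrArg star (hS (star c) (star_mem hc))
    simp only [star_mul, star_star] at h0
    exact h0.symm
  apply ext_inner_right ℂ
  have hfg : (fun v => ⟪S (T ξ), v⟫_ℂ) = fun v => ⟪T (S ξ), v⟫_ℂ := by
    apply Continuous.ext_on hcyclic (continuous_const.inner continuous_id)
      (continuous_const.inner continuous_id)
    rintro _ ⟨a, haC, rfl⟩
    have l1 : Tendsto (fun n => ⟪T ξ, a ((star (b n)) ξ)⟫_ℂ) atTop
        (𝓝 ⟪S (T ξ), a ξ⟫_ℂ) := by
      have ha : Tendsto (fun n => a ((star (b n)) ξ)) atTop (𝓝 (a ((star S) ξ))) := by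
        simpa only [Function.comp_def] using (a.continuous.tendsto _).comp hstar
      have h : Tendsto (fun n => ⟪T ξ, a ((star (b n)) ξ)⟫_ℂ) atTop
          (𝓝 ⟪T ξ, a ((star S) ξ)⟫_ℂ) := tendsto_const_nhds.inner ha
      have e0 : ⟪S (T ξ), a ξ⟫_ℂ = ⟪T ξ, a ((star S) ξ)⟫_ℂ := by
        rw [← ContinuousLinearMap.adjoint_inner_right S (T ξ) (a ξ)]
        congr 1
        calc (ContinuousLinearMap.adjoint S) (a ξ) = (star S * a) ξ := by
              rw [ContinuousLinearMap.star_eq_adjoint]; rfl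
          _ = (a * star S) ξ := by rw [← hS' a haC]
          _ = a ((star S) ξ) := rfl
      rw [e0]
      exact h
    have l2 : Tendsto (fun n => ⟪T ξ, a ((star (b n)) ξ)⟫_ℂ) atTop
        (𝓝 ⟪T (S ξ), a ξ⟫_ℂ) := by
      have e1 : ∀ n, ⟪T ξ, a ((star (b n)) ξ)⟫_ℂ = ⟪(b n) (T ξ), a ξ⟫_ℂ := by
        intro n
        have hcomm : a * star (b n) = star (b n) * a :=
          habelian a haC (star (b n)) (star_mem (hbC n))
        calc ⟪T ξ, a ((star (b n)) ξ)⟫_ℂ = ⟪T ξ, (a * star (b n)) ξ⟫_ℂ := rfl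
          _ = ⟪T ξ, (star (b n) * a) ξ⟫_ℂ := by rw [hcomm]
          _ = ⟪T ξ, (star (b n)) (a ξ)⟫_ℂ := rfl
          _ = ⟪(b n) (T ξ), a ξ⟫_ℂ := by
              rw [ContinuousLinearMap.star_eq_adjoint,
                ContinuousLinearMap.adjoint_inner_right]
      simp only [e1]
      exact hTS.inner tendsto_const_nhds
    exact tendsto_nhds_unique l1 l2
  intro v; exact congrFun hfg v

/-- Any two operators in the commutant of `C` commute. -/
lemma op_comm (C : VonNeumannAlgebra H)
    (habelian : ∀ c₁ ∈ C, ∀ c₂ ∈ C, c₁ * c₂ = c₂ * c₁) (ξ : H)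
    (hcyclic : Dense ((fun c : H →L[ℂ] H => c ξ) '' (C : Set (H →L[ℂ] H))))
    {S T : H →L[ℂ] H} (hS : ∀ c ∈ C, c * S = S * c) (hT : ∀ c ∈ C, c * T = T * c) :
    S * T = T * S := by
  have hfg : (⇑(S * T) : H → H) = ⇑(T * S) := by
    apply Continuous.ext_on hcyclic (S * T).continuous (T * S).continuous
    rintro _ ⟨a, haC, rfl⟩
    have key := apply_comm C habelian ξ hcyclic hS hT
    have haST : S * T * a = a * (S * T) := by
      rw [mul_assoc, ← hT a haC, ← mul_assoc, ← hS a haC, mul_assoc]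
    have haTS : T * S * a = a * (T * S) := by
      rw [mul_assoc, ← hS a haC, ← mul_assoc, ← hT a haC, mul_assoc]
    calc (S * T) (a ξ) = (S * T * a) ξ := rfl
      _ = (a * (S * T)) ξ := by rw [haST]
      _ = a (S (T ξ)) := rfl
      _ = a (T (S ξ)) := by rw [key]
      _ = (a * (T * S)) ξ := rfl
      _ = (T * S * a) ξ := by rw [haTS]
      _ = (T * S) (a ξ) := rfl
  ext x
  exact congrFun hfg x

end MaxAbelianAux

/-- An abelian von Neumann algebra `C` on a complex Hilbert space possessing a cyclic
vector `ξ` (i.e. `{Cξ : C ∈ C}` is dense) is maximal abelian: every bounded operator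
commuting with all elements of `C` belongs to `C`, that is, `C` equals its own
commutant. (Used in the proof of Theorem 3.) -/
theorem abelian_vonNeumannAlgebra_with_cyclic_vector_is_maximal_abelian
    {H : Type*} [NormedAddCommGroup H] [InnerProductSpace ℂ H] [CompleteSpace H]
    (C : VonNeumannAlgebra H)
    (habelian : ∀ c₁ ∈ C, ∀ c₂ ∈ C, c₁ * c₂ = c₂ * c₁)
    (ξ : H)
    (hcyclic : Dense ((fun c : H →L[ℂ] H => c ξ) '' (C : Set (H →L[ℂ] H)))) :
    (∀ T : H →L[ℂ] H, (∀ c ∈ C, T * c = c * T) → T ∈ C) ∧ C.commutant = C := by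
  have main : ∀ T : H →L[ℂ] H, (∀ c ∈ C, T * c = c * T) → T ∈ C := by
    intro T hT
    have hT' : ∀ c ∈ C, c * T = T * c := fun c hc => (hT c hc).symm
    rw [← C.commutant_commutant, VonNeumannAlgebra.mem_commutant_iff]
    intro S hSmem
    have hS : ∀ c ∈ C, c * S = S * c := fun c hc =>
      VonNeumannAlgebra.mem_commutant_iff.mp hSmem c hc
    exact MaxAbelianAux.op_comm C habelian ξ hcyclic hS hT'
  refine ⟨main, ?_⟩
  apply SetLike.ext
  intro T
  constructor
  · intro h
    exact main T fun c hc => (VonNeumannAlgebra.mem_commutant_iff.mp h c hc).symm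
  · intro h
    exact VonNeumannAlgebra.mem_commutant_iff.mpr fun g hg => habelian g hg T h
end

section
/- Let H be a complex Hilbert space and A a von Neumann algebra on H whose commutant C = A' is abelian. Fix ξ ∈ H and let E be the orthogonal projection onto the closure of {Bξ : B ∈ C}. Let X and Xʹ be bounded operators on H, each commuting with every element of C. Then the operators E∘X∘E and E∘Xʹ∘E commute: E X E Xʹ E = E Xʹ E X E. In particular, for every A ∈ A, E X E commutes with E A E. -/
/-- The orthogonal projection of `H` onto the closure of the subspace spanned by `S`,
viewed as a bounded operator on `H`. -/
noncomputable def projCl {H : Type*} [NormedAddCommGroup H] [InnerProductSpace ℂ H]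
    [CompleteSpace H] (S : Set H) : H →L[ℂ] H :=
  haveI : CompleteSpace ((Submodule.span ℂ S).topologicalClosure) :=
    ((Submodule.span ℂ S).isClosed_topologicalClosure).completeSpace_coe
  ((Submodule.span ℂ S).topologicalClosure).subtypeL.comp
    (Submodule.orthogonalProjection ((Submodule.span ℂ S).topologicalClosure))

/-- The orthogonal projection `E` onto the closure of `{Bξ : B ∈ A'}`, where `A'` is the
commutant of the von Neumann algebra `A`. -/
noncomputable def cyclicProj {H : Type*} [NormedAddCommGroup H] [InnerProductSpace ℂ H]
    [CompleteSpace H] (A : VonNeumannAlgebra H) (ξ : H) : H →L[ℂ] H :=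
  projCl ((fun B : H →L[ℂ] H => B ξ) '' (A.commutant : Set (H →L[ℂ] H)))

/-!
The projection `E` commutes with the abelian algebra `C = A'`, so with `S, Y` in the commutant
`C'` the compressions `T = ESE` and `T' = EYE` lie in `C'` as well. By the Cartesian decomposition
of `Y` one may take `T'` self-adjoint. Approximate `T'ξ` by `bₙξ` with `bₙ ∈ C`; since `bₙ - T'` is
normal, `bₙ⋆ξ → T'ξ` too, which moves `T'` across `T` in inner products against the dense set
`Cξ` of `cl(Cξ)`: `⟪Dξ, TT'ξ⟫ = ⟪Dξ, T'Tξ⟫` for `D ∈ C`. Hence `ETT'ξ = ET'Tξ`, and as `ETT'`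
and `ET'T` commute with `C`, they agree on `cl(Cξ)`, the range of `E`.
-/

open ContinuousLinearMap Submodule Filter Topology

theorem StarSubalgebra.mem_centralizer_self_iff {R A : Type*} [CommSemiring R] [StarRing R]
    [Semiring A] [StarRing A] [Algebra R A] [StarModule R A] {C : StarSubalgebra R A} {z : A} :
    z ∈ centralizer R (C : Set A) ↔ ∀ g ∈ C, g * z = z * g := by
  rw [mem_centralizer_iff]
  exact ⟨fun h g hg => (h g hg).1, fun h g hg => ⟨h g hg, h _ (star_mem hg)⟩⟩

theorem StarSubalgebra.realPart_mem {A : Type*} [Ring A] [StarRing A] [Algebra ℂ A]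
    [StarModule ℂ A] {C : StarSubalgebra ℂ A} {a : A} (ha : a ∈ C) : (realPart a : A) ∈ C := by
  rw [realPart_apply_coe, ← Complex.coe_smul]
  exact SMulMemClass.smul_mem _ (add_mem ha (star_mem ha))

theorem StarSubalgebra.imaginaryPart_mem {A : Type*} [Ring A] [StarRing A] [Algebra ℂ A]
    [StarModule ℂ A] {C : StarSubalgebra ℂ A} {a : A} (ha : a ∈ C) :
    (imaginaryPart a : A) ∈ C := by
  rw [imaginaryPart_apply_coe, ← Complex.coe_smul]
  exact SMulMemClass.smul_mem _ (SMulMemClass.smul_mem _ (sub_mem ha (star_mem ha)))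

theorem ContinuousLinearMap.apply_apply_comm {R M : Type*} [Semiring R] [TopologicalSpace M]
    [AddCommMonoid M] [Module R M] {S T : M →L[R] M} (h : S * T = T * S) (x : M) :
    S (T x) = T (S x) :=
  congr($h x)

theorem ContinuousLinearMap.norm_star_sub_apply_eq {𝕜 E : Type*} [RCLike 𝕜]
    [NormedAddCommGroup E] [InnerProductSpace 𝕜 E] [CompleteSpace E] {N T : E →L[𝕜] E}
    (hN : IsStarNormal N) (hT : IsSelfAdjoint T) (hNT : Commute N T) (x : E) :
    ‖(star N - T) x‖ = ‖(N - T) x‖ := by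
  have hTN' : Commute (star N) T := by simpa only [hT.star_eq] using hNT.star_star
  have hnormal : IsStarNormal (N - T) := by
    rw [isStarNormal_iff, star_sub, hT.star_eq]
    exact (hN.star_comm_self.sub_right hTN').sub_left (hNT.symm.sub_right (.refl T))
  rw [isStarNormal_iff_norm_eq_adjoint.mp hnormal x, ← star_eq_adjoint, star_sub, hT.star_eq]

section

variable {H : Type*} [NormedAddCommGroup H] [InnerProductSpace ℂ H] [CompleteSpace H]

section CyclicSubspace

variable (C : StarSubalgebra ℂ (H →L[ℂ] H)) (ξ : H)

abbrev cyclicSubspace : Submodule ℂ H :=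
  (span ℂ ((fun B : H →L[ℂ] H => B ξ) '' C)).topologicalClosure

variable {C ξ}

theorem apply_mem_cyclicSubspace {B : H →L[ℂ] H} (hB : B ∈ C) : B ξ ∈ cyclicSubspace C ξ :=
  le_topologicalClosure _ (subset_span ⟨B, hB, rfl⟩)

theorem cyclicSubspace_le_comap {B : H →L[ℂ] H} (hB : B ∈ C) :
    cyclicSubspace C ξ ≤ (cyclicSubspace C ξ).comap (B : H →ₗ[ℂ] H) := by
  refine topologicalClosure_minimal _ (span_le.mpr ?_)
    ((isClosed_topologicalClosure _).preimage B.continuous)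
  rintro _ ⟨D, hD, rfl⟩
  exact apply_mem_cyclicSubspace (mul_mem hB hD)

theorem exists_seq_tendsto_of_mem_cyclicSubspace {x : H} (hx : x ∈ cyclicSubspace C ξ) :
    ∃ b : ℕ → H →L[ℂ] H, (∀ n, b n ∈ C) ∧ Tendsto (fun n => b n ξ) atTop (𝓝 x) := by
  have horbit : ((fun B : H →L[ℂ] H => B ξ) '' C) =
      (C.toSubalgebra.toSubmodule.map (apply ℂ H ξ).toLinearMap : Set H) := rfl
  rw [← SetLike.mem_coe, topologicalClosure_coe, horbit, span_eq, ← horbit] at hx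
  obtain ⟨y, hy, hyx⟩ := mem_closure_iff_seq_limit.mp hx
  choose b hbC hby using hy
  exact ⟨b, hbC, by simpa only [hby] using hyx⟩

theorem mem_orthogonal_cyclicSubspace_iff {w : H} :
    w ∈ (cyclicSubspace C ξ)ᗮ ↔ ∀ D ∈ C, inner ℂ (D ξ) w = 0 := by
  refine ⟨fun hw D hD => inner_right_of_mem_orthogonal (apply_mem_cyclicSubspace hD) hw,
    fun h => ?_⟩
  rw [orthogonal_closure, mem_orthogonal]
  intro u hu
  induction hu using span_induction with
  | mem x hx => obtain ⟨D, hD, rfl⟩ := hx; exact h D hD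
  | zero => exact inner_zero_left w
  | add x y _ _ hx hy => rw [inner_add_left, hx, hy, add_zero]
  | smul a x _ hx => rw [inner_smul_left, hx, mul_zero]

theorem eqOn_cyclicSubspace_of_apply_eq {T₁ T₂ : H →L[ℂ] H}
    (h₁ : T₁ ∈ StarSubalgebra.centralizer ℂ (C : Set _))
    (h₂ : T₂ ∈ StarSubalgebra.centralizer ℂ (C : Set _)) (h : T₁ ξ = T₂ ξ) :
    Set.EqOn T₁ T₂ (cyclicSubspace C ξ) := by
  suffices cyclicSubspace C ξ ≤ (T₁ - T₂).ker from
    fun x hx => sub_eq_zero.mp (this hx)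
  refine topologicalClosure_minimal _ (span_le.mpr ?_) (T₁ - T₂).isClosed_ker
  rintro _ ⟨B, hB, rfl⟩
  have hB₁ := StarSubalgebra.mem_centralizer_self_iff.mp h₁ B hB
  have hB₂ := StarSubalgebra.mem_centralizer_self_iff.mp h₂ B hB
  change (T₁ - T₂) (B ξ) = 0
  rw [sub_apply, ← apply_apply_comm hB₁, ← apply_apply_comm hB₂, h, sub_self]

theorem starProjection_cyclicSubspace_mem_centralizer :
    (cyclicSubspace C ξ).starProjection ∈
      StarSubalgebra.centralizer ℂ (C : Set _) := by
  set E := (cyclicSubspace C ξ).starProjection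
  have hE : star E = E := (isSelfAdjoint_starProjection _).star_eq
  have hinv : ∀ B ∈ C, E * B * E = B * E := fun B hB => by
    ext x
    exact starProjection_eq_self_iff.mpr (cyclicSubspace_le_comap hB (starProjection_apply_mem _ x))
  refine StarSubalgebra.mem_centralizer_self_iff.mpr fun B hB => ?_
  have := congr(star $(hinv (star B) (star_mem hB)))
  simp only [star_mul, star_star, hE] at this
  calc B * E = E * B * E := (hinv B hB).symm
    _ = E * B := by rw [mul_assoc, this]

variable (hC : ∀ b₁ ∈ C, ∀ b₂ ∈ C, b₁ * b₂ = b₂ * b₁)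
include hC

theorem inner_apply_mul_comm_of_isSelfAdjoint {S S' : H →L[ℂ] H}
    (hS : S ∈ StarSubalgebra.centralizer ℂ (C : Set _))
    (hS' : S' ∈ StarSubalgebra.centralizer ℂ (C : Set _))
    (hsa : IsSelfAdjoint S') (hS'ξ : S' ξ ∈ cyclicSubspace C ξ) {D : H →L[ℂ] H} (hD : D ∈ C) :
    inner ℂ (D ξ) (S (S' ξ)) = inner ℂ (D ξ) (S' (S ξ)) := by
  have hCS := StarSubalgebra.mem_centralizer_self_iff.mp hS
  have hCS' := StarSubalgebra.mem_centralizer_self_iff.mp hS'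
  obtain ⟨b, hbC, hb⟩ := exists_seq_tendsto_of_mem_cyclicSubspace hS'ξ
  -- `b n - S'` is normal, so `star (b n) ξ` approximates `S' ξ` as well as `b n ξ` does
  have hb_star : Tendsto (fun n => star (b n) ξ) atTop (𝓝 (S' ξ)) := by
    rw [tendsto_iff_norm_sub_tendsto_zero] at hb ⊢
    refine hb.congr fun n => ?_
    have hnormal : IsStarNormal (b n) := ⟨hC _ (star_mem (hbC n)) _ (hbC n)⟩
    simpa only [sub_apply] using
      (norm_star_sub_apply_eq hnormal hsa (hCS' _ (hbC n)) ξ).symm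
  have hshift : ∀ n, inner ℂ (D ξ) (S (b n ξ)) = inner ℂ (D (star (b n) ξ)) (S ξ) := fun n => by
    rw [← apply_apply_comm (hCS _ (hbC n)), ← adjoint_inner_left, ← star_eq_adjoint,
      apply_apply_comm (hC _ (star_mem (hbC n)) _ hD)]
  have hlim₁ : Tendsto (fun n => inner ℂ (D ξ) (S (b n ξ))) atTop
      (𝓝 (inner ℂ (D ξ) (S (S' ξ)))) :=
    tendsto_const_nhds.inner ((S.continuous.tendsto _).comp hb)
  have hlim₂ : Tendsto (fun n => inner ℂ (D ξ) (S (b n ξ))) atTop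
      (𝓝 (inner ℂ (D (S' ξ)) (S ξ))) := by
    simp only [hshift]
    exact ((D.continuous.tendsto _).comp hb_star).inner tendsto_const_nhds
  rw [tendsto_nhds_unique hlim₁ hlim₂, apply_apply_comm (hCS' D hD)]
  exact hsa.isSymmetric _ _

theorem starProjection_cyclicSubspace_mul_comm_of_isSelfAdjoint {S S' : H →L[ℂ] H}
    (hS : S ∈ StarSubalgebra.centralizer ℂ (C : Set _))
    (hS' : S' ∈ StarSubalgebra.centralizer ℂ (C : Set _))
    (hsa : IsSelfAdjoint S') (hS'ξ : S' ξ ∈ cyclicSubspace C ξ) :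
    (cyclicSubspace C ξ).starProjection * (S * S') * (cyclicSubspace C ξ).starProjection =
      (cyclicSubspace C ξ).starProjection * (S' * S) * (cyclicSubspace C ξ).starProjection := by
  have hE := starProjection_cyclicSubspace_mem_centralizer (C := C) (ξ := ξ)
  set E := (cyclicSubspace C ξ).starProjection
  have hξ : E (S (S' ξ)) = E (S' (S ξ)) := by
    rw [← sub_eq_zero, ← map_sub, starProjection_apply_eq_zero_iff,
      mem_orthogonal_cyclicSubspace_iff]
    intro D hD
    rw [inner_sub_right, inner_apply_mul_comm_of_isSelfAdjoint hC hS hS' hsa hS'ξ hD, sub_self]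
  have hEqOn := eqOn_cyclicSubspace_of_apply_eq (T₁ := E * (S * S')) (T₂ := E * (S' * S))
    (mul_mem hE (mul_mem hS hS')) (mul_mem hE (mul_mem hS' hS)) hξ
  ext x
  exact hEqOn (starProjection_apply_mem _ x)

theorem commute_conj_starProjection_cyclicSubspace_of_isSelfAdjoint {S Y : H →L[ℂ] H}
    (hS : S ∈ StarSubalgebra.centralizer ℂ (C : Set _))
    (hY : Y ∈ StarSubalgebra.centralizer ℂ (C : Set _)) (hsa : IsSelfAdjoint Y) :
    Commute ((cyclicSubspace C ξ).starProjection * S * (cyclicSubspace C ξ).starProjection)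
      ((cyclicSubspace C ξ).starProjection * Y * (cyclicSubspace C ξ).starProjection) := by
  have hE := starProjection_cyclicSubspace_mem_centralizer (C := C) (ξ := ξ)
  have hEsa : IsSelfAdjoint (cyclicSubspace C ξ).starProjection := isSelfAdjoint_starProjection _
  have hEE := (cyclicSubspace C ξ).isIdempotentElem_starProjection
  have h := starProjection_cyclicSubspace_mul_comm_of_isSelfAdjoint hC
    (mul_mem (mul_mem hE hS) hE) (mul_mem (mul_mem hE hY) hE)
    (by simpa only [hEsa.star_eq] using hsa.conjugate (cyclicSubspace C ξ).starProjection)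
    (starProjection_apply_mem _ _)
  simpa only [Commute, SemiconjBy, mul_assoc, hEE.mul_self_mul, hEE.eq] using h

theorem commute_conj_starProjection_cyclicSubspace {S Y : H →L[ℂ] H}
    (hS : S ∈ StarSubalgebra.centralizer ℂ (C : Set _))
    (hY : Y ∈ StarSubalgebra.centralizer ℂ (C : Set _)) :
    Commute ((cyclicSubspace C ξ).starProjection * S * (cyclicSubspace C ξ).starProjection)
      ((cyclicSubspace C ξ).starProjection * Y * (cyclicSubspace C ξ).starProjection) := by
  have hre := commute_conj_starProjection_cyclicSubspace_of_isSelfAdjoint (ξ := ξ) hC hS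
    (StarSubalgebra.realPart_mem hY) (realPart Y).2
  have him := commute_conj_starProjection_cyclicSubspace_of_isSelfAdjoint (ξ := ξ) hC hS
    (StarSubalgebra.imaginaryPart_mem hY) (imaginaryPart Y).2
  rw [← realPart_add_I_smul_imaginaryPart Y, mul_add, add_mul, mul_smul_comm, smul_mul_assoc]
  exact hre.add_right (him.smul_right _)

end CyclicSubspace

theorem cyclicProj_eq_starProjection (A : VonNeumannAlgebra H) (ξ : H) :
    cyclicProj A ξ = (cyclicSubspace A.commutant.toStarSubalgebra ξ).starProjection :=
  rfl

end

/-- (Reduced-commutativity step in the proof of Theorem 3.) If the commutant `C = A'` of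
the von Neumann algebra `A` is abelian, `E` is the orthogonal projection onto the closure
of `{Bξ : B ∈ C}`, and `X`, `X'` are bounded operators each commuting with every element
of `C`, then `E X E X' E = E X' E X E`; in particular `E X E` commutes with `E A E` for
every `A ∈ A`. -/
theorem cyclicProj_reduced_operators_commute
    {H : Type*} [NormedAddCommGroup H] [InnerProductSpace ℂ H] [CompleteSpace H]
    (A : VonNeumannAlgebra H)
    (habelian : ∀ b₁ ∈ A.commutant, ∀ b₂ ∈ A.commutant, b₁ * b₂ = b₂ * b₁)
    (ξ : H) (X X' : H →L[ℂ] H)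
    (hX : ∀ B ∈ A.commutant, X * B = B * X)
    (hX' : ∀ B ∈ A.commutant, X' * B = B * X') :
    (cyclicProj A ξ * X * cyclicProj A ξ * X' * cyclicProj A ξ =
        cyclicProj A ξ * X' * cyclicProj A ξ * X * cyclicProj A ξ) ∧
      ∀ a ∈ A,
        (cyclicProj A ξ * X * cyclicProj A ξ) * (cyclicProj A ξ * a * cyclicProj A ξ) =
          (cyclicProj A ξ * a * cyclicProj A ξ) * (cyclicProj A ξ * X * cyclicProj A ξ) := by
  have mem_centralizer : ∀ Z : H →L[ℂ] H, (∀ B ∈ A.commutant, Z * B = B * Z) →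
      Z ∈ StarSubalgebra.centralizer ℂ (A.commutant.toStarSubalgebra : Set (H →L[ℂ] H)) :=
    fun Z hZ => StarSubalgebra.mem_centralizer_self_iff.mpr fun B hB => (hZ B hB).symm
  have hcomm := fun Y hY => commute_conj_starProjection_cyclicSubspace (ξ := ξ) habelian
    (mem_centralizer X hX) (mem_centralizer Y hY)
  have hEE := (cyclicSubspace A.commutant.toStarSubalgebra ξ).isIdempotentElem_starProjection
  rw [cyclicProj_eq_starProjection]
  refine ⟨?_, fun a ha => (hcomm a fun B hB => VonNeumannAlgebra.mem_commutant_iff.mp hB a ha).eq⟩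
  simpa only [mul_assoc, hEE.mul_self_mul] using (hcomm X' hX').eq
end

section
/- Let H be a complex Hilbert space and A a von Neumann algebra on H whose commutant C = A' is abelian. Fix ξ ∈ H and let E be the orthogonal projection onto the closure of {Bξ : B ∈ C}. Let X be a bounded operator on H commuting with every element of C. Then for every A ∈ A with Aξ = 0 one has A(E X ξ) = 0. Consequently the assignment Aξ ↦ A E X ξ (A ∈ A) is a well-defined linear map on the subspace {Aξ : A ∈ A}. -/
theorem projCl_mem_topologicalClosure_span {H : Type*} [NormedAddCommGroup H]
    [InnerProductSpace ℂ H] [CompleteSpace H] (S : Set H) (x : H) :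
    projCl S x ∈ (Submodule.span ℂ S).topologicalClosure :=
  Subtype.coe_prop _

theorem topologicalClosure_span_image_apply_le_ker {𝕜 E : Type*} [NontriviallyNormedField 𝕜]
    [NormedAddCommGroup E] [NormedSpace 𝕜 E] {S : Set (E →L[𝕜] E)} {a : E →L[𝕜] E} {ξ : E}
    (hS : ∀ B ∈ S, a * B = B * a) (haξ : a ξ = 0) :
    (Submodule.span 𝕜 ((fun B : E →L[𝕜] E => B ξ) '' S)).topologicalClosure ≤
      LinearMap.ker (a : E →ₗ[𝕜] E) := by
  refine Submodule.topologicalClosure_minimal _ ?_ a.isClosed_ker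
  rw [Submodule.span_le]
  rintro _ ⟨B, hB, rfl⟩
  calc a (B ξ) = (a * B) ξ := rfl
    _ = B (a ξ) := by rw [hS B hB]; rfl
    _ = 0 := by rw [haξ, map_zero]

theorem cyclicProj_welldefined_conditional_expectation_general
    {H : Type*} [NormedAddCommGroup H] [InnerProductSpace ℂ H] [CompleteSpace H]
    (A : VonNeumannAlgebra H)
    (ξ : H) (X : H →L[ℂ] H) :
    (∀ a ∈ A, a ξ = 0 → a (cyclicProj A ξ (X ξ)) = 0) ∧
      ∀ a ∈ A, ∀ a' ∈ A, a ξ = a' ξ →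
        a (cyclicProj A ξ (X ξ)) = a' (cyclicProj A ξ (X ξ)) := by
  have kills : ∀ a ∈ A, a ξ = 0 → a (cyclicProj A ξ (X ξ)) = 0 := fun a ha haξ =>
    topologicalClosure_span_image_apply_le_ker
      (fun B hB => VonNeumannAlgebra.mem_commutant_iff.mp hB a ha) haξ
      (projCl_mem_topologicalClosure_span _ _)
  refine ⟨kills, fun a ha a' ha' hξ => ?_⟩
  have := kills (a - a') (sub_mem ha ha') (by rw [sub_apply, hξ, sub_self])
  rwa [sub_apply, sub_eq_zero] at this

/-- (Well-definedness of formula (3.5) in Theorem 3.) If the commutant `C = A'` is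
abelian, `E` the orthogonal projection onto the closure of `{Bξ : B ∈ C}`, and `X` a
bounded operator commuting with every element of `C`, then `A ∈ A` with `Aξ = 0` implies
`A(E X ξ) = 0`; consequently `Aξ ↦ A E X ξ` is well defined on `{Aξ : A ∈ A}`. -/
theorem cyclicProj_welldefined_conditional_expectation
    {H : Type*} [NormedAddCommGroup H] [InnerProductSpace ℂ H] [CompleteSpace H]
    (A : VonNeumannAlgebra H)
    (habelian : ∀ b₁ ∈ A.commutant, ∀ b₂ ∈ A.commutant, b₁ * b₂ = b₂ * b₁)
    (ξ : H) (X : H →L[ℂ] H)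
    (hX : ∀ B ∈ A.commutant, X * B = B * X) :
    (∀ a ∈ A, a ξ = 0 → a (cyclicProj A ξ (X ξ)) = 0) ∧
      ∀ a ∈ A, ∀ a' ∈ A, a ξ = a' ξ →
        a (cyclicProj A ξ (X ξ)) = a' (cyclicProj A ξ (X ξ)) :=
  cyclicProj_welldefined_conditional_expectation_general A ξ X
end

section
/- Let H be a complex Hilbert space and A a von Neumann algebra on H whose commutant C = A' is abelian. Fix ξ ∈ H and let E be the orthogonal projection onto the closure of {Bξ : B ∈ C}. Let X be a bounded operator on H commuting with every element of C. Then for every A ∈ A and every B ∈ C one has A E (X*B) ξ = B (A E X ξ); that is, the map ε(X) defined on {Aξ : A ∈ A} by ε(X)Aξ = A E X ξ satisfies the modularity property ε(XB) = B ε(X) on this domain. Moreover E(1)ξ-unitality holds: A E ξ = A ξ for every A ∈ A. -/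
/-!
Every `B ∈ A'` leaves `cl(A'ξ)` invariant (as `B A' ⊆ A'`), and so does `B† ∈ A'`; hence the
orthogonal projection `E` onto it commutes with `A'`. Modularity is then just moving `b ∈ A'`
past `X`, `E` and `a ∈ A`, and unitality is `ξ = 1 ξ ∈ cl(A'ξ)`.
-/

open Module.End Submodule

theorem Submodule.commute_starProjection_of_mem_invtSubmodule {𝕜 E : Type*} [RCLike 𝕜]
    [NormedAddCommGroup E] [InnerProductSpace 𝕜 E] [CompleteSpace E] {K : Submodule 𝕜 E}
    [K.HasOrthogonalProjection] {T : E →L[𝕜] E} (hT : K ∈ invtSubmodule T.toLinearMap)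
    (hT' : K ∈ invtSubmodule T.adjoint.toLinearMap) :
    Commute K.starProjection T := by
  ext v
  have hPv : T (K.starProjection v) ∈ K := hT (K.starProjection_apply_mem v)
  have hperp : T (v - K.starProjection v) ∈ Kᗮ :=
    ContinuousLinearMap.orthogonal_mem_invtSubmodule hT' (K.sub_starProjection_mem_orthogonal v)
  exact K.eq_starProjection_of_mem_orthogonal' hPv hperp (by simp)

section

variable {H : Type*} [NormedAddCommGroup H] [InnerProductSpace ℂ H] [CompleteSpace H]

theorem projCl_eq_starProjection (S : Set H) :
    projCl S = (span ℂ S).topologicalClosure.starProjection :=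
  rfl

theorem projCl_apply_of_mem {S : Set H} {x : H} (hx : x ∈ S) : projCl S x = x := by
  rw [projCl_eq_starProjection]
  exact starProjection_eq_self_iff.2 (le_topologicalClosure _ (subset_span hx))

theorem span_image_apply_mem_invtSubmodule (S : StarSubalgebra ℂ (H →L[ℂ] H)) (ξ : H)
    {B : H →L[ℂ] H} (hB : B ∈ S) :
    span ℂ ((fun C : H →L[ℂ] H => C ξ) '' S) ∈ invtSubmodule B.toLinearMap := by
  rw [mem_invtSubmodule, span_le]
  rintro _ ⟨C, hC, rfl⟩
  exact subset_span ⟨B * C, S.mul_mem hB hC, rfl⟩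

theorem commute_projCl_image_apply (S : StarSubalgebra ℂ (H →L[ℂ] H)) (ξ : H)
    {B : H →L[ℂ] H} (hB : B ∈ S) :
    Commute (projCl ((fun C : H →L[ℂ] H => C ξ) '' S)) B := by
  rw [projCl_eq_starProjection]
  exact commute_starProjection_of_mem_invtSubmodule
    (topologicalClosure_mem_invtSubmodule (span_image_apply_mem_invtSubmodule S ξ hB))
    (topologicalClosure_mem_invtSubmodule (span_image_apply_mem_invtSubmodule S ξ
      (ContinuousLinearMap.star_eq_adjoint B ▸ star_mem hB)))

end

theorem cyclicProj_conditional_expectation_modular_unital_general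
    {H : Type*} [NormedAddCommGroup H] [InnerProductSpace ℂ H] [CompleteSpace H]
    (A : VonNeumannAlgebra H)
    (ξ : H) (X : H →L[ℂ] H)
    (hX : ∀ B ∈ A.commutant, X * B = B * X) :
    (∀ a ∈ A, ∀ b ∈ A.commutant,
        a (cyclicProj A ξ ((X * b) ξ)) = b (a (cyclicProj A ξ (X ξ)))) ∧
      ∀ a ∈ A, a (cyclicProj A ξ ξ) = a ξ := by
  refine ⟨fun a ha b hb => ?_, fun a _ => congrArg a (projCl_apply_of_mem ⟨1, one_mem _, rfl⟩)⟩
  set E := cyclicProj A ξ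
  have hEb : E * b = b * E := (commute_projCl_image_apply A.commutant.toStarSubalgebra ξ hb).eq
  have hab : a * b = b * a := VonNeumannAlgebra.mem_commutant_iff.1 hb a ha
  have key : a * E * (X * b) = b * (a * E * X) :=
    calc a * E * (X * b) = a * (E * b) * X := by rw [hX b hb]; simp only [mul_assoc]
      _ = b * (a * E * X) := by rw [hEb, ← mul_assoc, hab]; simp only [mul_assoc]
  exact DFunLike.congr_fun key ξ

/-- (Modularity and unitality of the conditional expectation (3.5) in Theorem 3.) If the
commutant `C = A'` is abelian, `E` the orthogonal projection onto the closure of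
`{Bξ : B ∈ C}`, and `X` a bounded operator commuting with every element of `C`, then for
`A ∈ A` and `B ∈ C` one has `A E (X B) ξ = B (A E X ξ)` (modularity of
`ε(X) : Aξ ↦ A E X ξ`), and `A E ξ = A ξ` (unitality). -/
theorem cyclicProj_conditional_expectation_modular_unital
    {H : Type*} [NormedAddCommGroup H] [InnerProductSpace ℂ H] [CompleteSpace H]
    (A : VonNeumannAlgebra H)
    (habelian : ∀ b₁ ∈ A.commutant, ∀ b₂ ∈ A.commutant, b₁ * b₂ = b₂ * b₁)
    (ξ : H) (X : H →L[ℂ] H)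
    (hX : ∀ B ∈ A.commutant, X * B = B * X) :
    (∀ a ∈ A, ∀ b ∈ A.commutant,
        a (cyclicProj A ξ ((X * b) ξ)) = b (a (cyclicProj A ξ (X ξ)))) ∧
      ∀ a ∈ A, a (cyclicProj A ξ ξ) = a ξ :=
  cyclicProj_conditional_expectation_modular_unital_general A ξ X hX
end
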